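/- Let ‖·‖ be a strictly monotone norm on real K×K matrices and γ : [0,1] → [0,1] strictly increasing with γ(0) = 0 and γ(1) = 1. Then the coefficient ψ_{‖·‖,γ} satisfies: (i) 0 ≤ ψ_{‖·‖,γ}(X,Y) ≤ 1; (ii) ψ_{‖·‖,γ}(X,Y) = 0 if and only if X and Y are independent; (iii) ψ_{‖·‖,γ}(X,Y) = 1 if and only if there exists a Borel measurable function h : ℋ → {1,…,K} with Y = h(X) almost surely; (iv) ψ_{‖·‖,γ}(X,Y) ≤ ψ_{‖·‖,γ}((X,Z),Y), with equality if and only if Y and Z are conditionally independent given X. -/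

import Mathlib

open MeasureTheory ProbabilityTheory Filter Set

noncomputable section

/-- Indicator (as a real-valued function) of the event `Y = k`. -/
def ind {Ω : Type*} (Y : Ω → ℕ) (k : ℕ) : Ω → ℝ := fun ω => if Y ω = k then 1 else 0

/-- `p_k = P(Y = k)`. -/
def levelProb {Ω : Type*} [MeasurableSpace Ω] (P : Measure Ω) (Y : Ω → ℕ) (k : ℕ) : ℝ :=
  (P {ω | Y ω = k}).toReal

/-- Covariance of two real-valued random variables. -/
def cov {Ω : Type*} [MeasurableSpace Ω] (P : Measure Ω) (f g : Ω → ℝ) : ℝ :=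
  ∫ ω, f ω * g ω ∂P - (∫ ω, f ω ∂P) * (∫ ω, g ω ∂P)

/-- `Q_k(X) = P(Y = k ∣ X)`, the conditional expectation of `1{Y=k}` given `σ(X)`. -/
def condProb {Ω H : Type*} [MeasurableSpace Ω] [MeasurableSpace H]
    (P : Measure Ω) (X : Ω → H) (Y : Ω → ℕ) (k : ℕ) : Ω → ℝ :=
  P[ind Y k | MeasurableSpace.comap X inferInstance]

/-- The dependence coefficient
`ψ(X,Y) = (1/(K−1)) Σ_{k,l=1}^K Cov(Q_k(X), Q_l(X))² / (p_k p_l)`. -/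
def psi {Ω H : Type*} [MeasurableSpace Ω] [MeasurableSpace H]
    (P : Measure Ω) (X : Ω → H) (Y : Ω → ℕ) (K : ℕ) : ℝ :=
  (1 / ((K : ℝ) - 1)) * ∑ k ∈ Finset.Icc 1 K, ∑ l ∈ Finset.Icc 1 K,
    (cov P (condProb P X Y k) (condProb P X Y l)) ^ 2 / (levelProb P Y k * levelProb P Y l)

/-- The covariance matrix `Var(Q(X))` of the random vector `Q(X) = (Q_1(X),…,Q_K(X))`,
indexed by `Fin K` (index `k` corresponds to level `k+1`). -/
def covMatrix {Ω H : Type*} [MeasurableSpace Ω] [MeasurableSpace H]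
    (P : Measure Ω) (X : Ω → H) (Y : Ω → ℕ) (K : ℕ) : Matrix (Fin K) (Fin K) ℝ :=
  fun k l => cov P (condProb P X Y ((k : ℕ) + 1)) (condProb P X Y ((l : ℕ) + 1))

/-- The covariance matrix `Var(Q(Y))` of the one-hot vector of `Y`: diagonal entries
`p_k − p_k²`, off-diagonal entries `−p_k p_l`. -/
def varQY {Ω : Type*} [MeasurableSpace Ω] (P : Measure Ω) (Y : Ω → ℕ) (K : ℕ) :
    Matrix (Fin K) (Fin K) ℝ := fun k l =>
  if k = l then levelProb P Y ((k : ℕ) + 1) - (levelProb P Y ((k : ℕ) + 1)) ^ 2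
  else -(levelProb P Y ((k : ℕ) + 1) * levelProb P Y ((l : ℕ) + 1))

/-!
Write `C(m)` for the covariance matrix of the conditional probabilities `P(Y = k ∣ m)`. For
`m₁ ≤ m₂`, the law of total covariance together with the tower property identifies
`C(m₂) - C(m₁)` with the `L²` Gram matrix of the increments `P(Y = k ∣ m₂) - P(Y = k ∣ m₁)`.
Hence `C` is monotone for the Loewner order, and `C(m₁) = C(m₂)` exactly when these increments
vanish almost surely. Along the chain `⊥ ≤ σ(X) ≤ σ(X, Z) ≤ 𝒜` this gives
`0 = C(⊥) ≤ Var(Q(X)) ≤ Var(Q(X, Z)) ≤ C(𝒜) = Var(Q(Y))`, and `A ↦ γ(‖A‖ / ‖Var(Q(Y))‖)` is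
strictly monotone on that Loewner interval. The three equality cases thus become equalities of
conditional probabilities for two consecutive σ-algebras of the chain, which characterise
independence of `X` and `Y`, `Y` being a function of `X`, and conditional independence of `Y`
and `Z` given `X`.
-/

open scoped MatrixOrder

local notation "σ(" X ")" => MeasurableSpace.comap X inferInstance

section Levels

variable {Ω : Type*} {mΩ : MeasurableSpace Ω} {Y : Ω → ℕ}

lemma ind_eq_indicator (Y : Ω → ℕ) (k : ℕ) :
    ind Y k = (Y ⁻¹' {k}).indicator fun _ => 1 := by
  ext ω
  by_cases h : Y ω = k <;> simp [ind, h]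

lemma measurable_ind {m : MeasurableSpace Ω} (hY : Measurable[m] Y) (k : ℕ) :
    Measurable[m] (ind Y k) :=
  (measurable_of_countable fun n : ℕ => if n = k then (1 : ℝ) else 0).comp hY

lemma memLp_ind (hY : Measurable Y) (P : Measure Ω) [IsFiniteMeasure P] (p : ENNReal) (k : ℕ) :
    MemLp (ind Y k) p P := by
  refine MemLp.of_bound (measurable_ind hY k).aestronglyMeasurable 1 (ae_of_all _ fun ω => ?_)
  unfold ind; split_ifs <;> simp

lemma integral_ind (hY : Measurable Y) (P : Measure Ω) (k : ℕ) :
    ∫ ω, ind Y k ω ∂P = levelProb P Y k := by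
  rw [ind_eq_indicator, integral_indicator_const _ (hY (measurableSet_singleton k)), smul_eq_mul,
    mul_one]
  rfl

lemma ind_mul_ind (Y : Ω → ℕ) (k l : ℕ) :
    (fun ω => ind Y k ω * ind Y l ω) = if k = l then ind Y k else 0 := by
  ext ω
  unfold ind
  split_ifs <;> simp_all

end Levels

section Covariance

variable {Ω : Type*} {m mΩ : MeasurableSpace Ω} {P : Measure Ω} {u v : Ω → ℝ}

lemma cov_congr_ae {u' v' : Ω → ℝ} (hu : u =ᵐ[P] u') (hv : v =ᵐ[P] v') :
    cov P u v = cov P u' v' := by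
  unfold cov
  rw [integral_congr_ae hu, integral_congr_ae hv]
  congr 1
  exact integral_congr_ae (hu.mul hv)

variable [IsProbabilityMeasure P]

lemma cov_const (a b : ℝ) : cov P (fun _ => a) (fun _ => b) = 0 := by
  simp [cov]

lemma integral_mul_condExp (hm : m ≤ mΩ) (hu : MemLp u 2 P) (hv : MemLp v 2 P) :
    ∫ ω, u ω * (P[v|m]) ω ∂P = ∫ ω, (P[u|m]) ω * (P[v|m]) ω ∂P := by
  have hEv : MemLp (P[v|m]) 2 P := hv.condExp one_le_two
  rw [← integral_condExp hm]
  exact integral_congr_ae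
    (condExp_mul_of_stronglyMeasurable_right stronglyMeasurable_condExp (hu.integrable_mul hEv)
      (hu.integrable one_le_two))

/-- **Law of total covariance**. -/
lemma cov_sub_cov_condExp (hm : m ≤ mΩ) (hu : MemLp u 2 P) (hv : MemLp v 2 P) :
    cov P u v - cov P (P[u|m]) (P[v|m]) =
      ∫ ω, (u ω - (P[u|m]) ω) * (v ω - (P[v|m]) ω) ∂P := by
  have hEu : MemLp (P[u|m]) 2 P := hu.condExp one_le_two
  have hEv : MemLp (P[v|m]) 2 P := hv.condExp one_le_two
  have huv : Integrable (fun ω => u ω * v ω) P := hu.integrable_mul hv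
  have huEv : Integrable (fun ω => u ω * (P[v|m]) ω) P := hu.integrable_mul hEv
  have hEuv : Integrable (fun ω => (P[u|m]) ω * v ω) P := hEu.integrable_mul hv
  have hEuEv : Integrable (fun ω => (P[u|m]) ω * (P[v|m]) ω) P := hEu.integrable_mul hEv
  have h₂ : ∫ ω, (P[u|m]) ω * v ω ∂P = ∫ ω, (P[u|m]) ω * (P[v|m]) ω ∂P := by
    simpa only [mul_comm] using integral_mul_condExp hm hv hu
  calc cov P u v - cov P (P[u|m]) (P[v|m])
      = (∫ ω, u ω * v ω ∂P - ∫ ω, u ω * (P[v|m]) ω ∂P) -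
          (∫ ω, (P[u|m]) ω * v ω ∂P - ∫ ω, (P[u|m]) ω * (P[v|m]) ω ∂P) := by
        rw [integral_mul_condExp hm hu hv, h₂]
        simp only [cov, integral_condExp hm]
        ring
    _ = ∫ ω, (u ω * v ω - u ω * (P[v|m]) ω) -
          ((P[u|m]) ω * v ω - (P[u|m]) ω * (P[v|m]) ω) ∂P := by
        rw [integral_sub (huv.sub' huEv) (hEuv.sub' hEuEv), integral_sub huv huEv,
          integral_sub hEuv hEuEv]
    _ = ∫ ω, (u ω - (P[u|m]) ω) * (v ω - (P[v|m]) ω) ∂P := by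
        congr 1; ext ω; ring

end Covariance

lemma posSemidef_integral_mul {Ω ι : Type*} [Finite ι] {mΩ : MeasurableSpace Ω} {μ : Measure Ω}
    {h : ι → Ω → ℝ} (hh : ∀ i, MemLp (h i) 2 μ) :
    (Matrix.of fun i j => ∫ ω, h i ω * h j ω ∂μ).PosSemidef := by
  have hgram : (Matrix.of fun i j => ∫ ω, h i ω * h j ω ∂μ) =
      Matrix.gram ℝ fun i => (hh i).toLp (h i) := by
    ext i j
    rw [Matrix.of_apply, Matrix.gram_apply, L2.inner_def]
    refine integral_congr_ae ?_
    filter_upwards [(hh i).coeFn_toLp, (hh j).coeFn_toLp] with ω hi hj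
    simp [hi, hj, mul_comm]
  rw [hgram]
  exact Matrix.posSemidef_gram ℝ _

def condCovMatrix {Ω ι : Type*} (m : MeasurableSpace Ω) {mΩ : MeasurableSpace Ω}
    (P : Measure Ω) (f : ι → Ω → ℝ) : Matrix ι ι ℝ :=
  Matrix.of fun i j => cov P (P[f i|m]) (P[f j|m])

section CondCovMatrix

variable {Ω ι : Type*} {m₁ m₂ mΩ : MeasurableSpace Ω} {P : Measure Ω} [IsProbabilityMeasure P]
  {f : ι → Ω → ℝ}

lemma condCovMatrix_bot : condCovMatrix ⊥ P f = 0 := by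
  ext i j
  simp [condCovMatrix, cov_const]

lemma condCovMatrix_sub_condCovMatrix (h₁₂ : m₁ ≤ m₂) (h₂ : m₂ ≤ mΩ) (hf : ∀ i, MemLp (f i) 2 P) :
    condCovMatrix m₂ P f - condCovMatrix m₁ P f = Matrix.of fun i j =>
      ∫ ω, ((P[f i|m₂]) ω - (P[f i|m₁]) ω) * ((P[f j|m₂]) ω - (P[f j|m₁]) ω) ∂P := by
  have tower (i : ι) : P[P[f i|m₂]|m₁] =ᵐ[P] P[f i|m₁] := condExp_condExp_of_le h₁₂ h₂
  ext i j
  simp only [condCovMatrix, Matrix.sub_apply, Matrix.of_apply]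
  rw [← cov_congr_ae (tower i) (tower j),
    cov_sub_cov_condExp (h₁₂.trans h₂) ((hf i).condExp one_le_two) ((hf j).condExp one_le_two)]
  refine integral_congr_ae ?_
  filter_upwards [tower i, tower j] with ω hi hj
  rw [hi, hj]

lemma condCovMatrix_mono [Finite ι] (h₁₂ : m₁ ≤ m₂) (h₂ : m₂ ≤ mΩ) (hf : ∀ i, MemLp (f i) 2 P) :
    condCovMatrix m₁ P f ≤ condCovMatrix m₂ P f := by
  rw [Matrix.le_iff, condCovMatrix_sub_condCovMatrix h₁₂ h₂ hf]
  exact posSemidef_integral_mul fun i =>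
    ((hf i).condExp (m := m₂) one_le_two).sub ((hf i).condExp (m := m₁) one_le_two)

lemma condCovMatrix_eq_iff (h₁₂ : m₁ ≤ m₂) (h₂ : m₂ ≤ mΩ) (hf : ∀ i, MemLp (f i) 2 P) :
    condCovMatrix m₁ P f = condCovMatrix m₂ P f ↔ ∀ i, P[f i|m₂] =ᵐ[P] P[f i|m₁] := by
  refine ⟨fun h i => ?_, fun h => ?_⟩
  · have hdiag := congr_fun₂ (condCovMatrix_sub_condCovMatrix h₁₂ h₂ hf) i i
    rw [← h, sub_self, Matrix.zero_apply, Matrix.of_apply, eq_comm,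
      integral_eq_zero_iff_of_nonneg (fun ω => mul_self_nonneg _)] at hdiag
    · filter_upwards [hdiag] with ω hω
      exact sub_eq_zero.mp (mul_self_eq_zero.mp hω)
    · have hd := ((hf i).condExp (m := m₂) one_le_two).sub ((hf i).condExp (m := m₁) one_le_two)
      exact hd.integrable_mul hd
  · ext i j
    exact cov_congr_ae (h i).symm (h j).symm

end CondCovMatrix

section OneHot

variable {Ω : Type*} {m₁ m₂ mΩ : MeasurableSpace Ω} {P : Measure Ω} {Y : Ω → ℕ}

lemma cov_ind_ind (hY : Measurable Y) (k l : ℕ) :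
    cov P (ind Y k) (ind Y l) =
      (if k = l then levelProb P Y k else 0) - levelProb P Y k * levelProb P Y l := by
  unfold cov
  rw [ind_mul_ind, integral_ind hY, integral_ind hY]
  split_ifs <;> simp [integral_ind hY]

variable [IsProbabilityMeasure P]

lemma condExp_ind_self (hY : Measurable Y) (k : ℕ) : P[ind Y k|mΩ] = ind Y k :=
  condExp_of_stronglyMeasurable le_rfl (measurable_ind hY k).stronglyMeasurable
    ((memLp_ind hY P 1 k).integrable le_rfl)

lemma varQY_eq_condCovMatrix (hY : Measurable Y) (K : ℕ) :
    varQY P Y K = condCovMatrix mΩ P fun k : Fin K => ind Y (k + 1) := by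
  ext k l
  simp only [condCovMatrix, Matrix.of_apply, condExp_ind_self hY, cov_ind_ind hY, varQY,
    add_left_inj, Fin.val_inj]
  split_ifs with hkl
  · subst hkl; ring
  · ring

lemma varQY_ne_zero {K : ℕ} (hK : 2 ≤ K) (hY : Measurable Y)
    (hp : ∀ k ∈ Finset.Icc 1 K, 0 < P {ω | Y ω = k}) : varQY P Y K ≠ 0 := by
  have hlevel (k : ℕ) : MeasurableSet {ω | Y ω = k} := hY (measurableSet_singleton k)
  have hp₁ : 0 < levelProb P Y 1 :=
    ENNReal.toReal_pos (hp 1 (by simp; omega)).ne' (measure_ne_top _ _)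
  have hp₂ : 0 < levelProb P Y 2 :=
    ENNReal.toReal_pos (hp 2 (by simp; omega)).ne' (measure_ne_top _ _)
  have hsum : levelProb P Y 1 + levelProb P Y 2 ≤ 1 := by
    have hdisj : Disjoint {ω | Y ω = 1} {ω | Y ω = 2} :=
      Set.disjoint_left.mpr fun ω h₁ h₂ => by simp_all
    simpa only [levelProb, ← measureReal_def, measureReal_union (μ := P) hdisj (hlevel 2)]
      using measureReal_le_one (μ := P) (s := {ω | Y ω = 1} ∪ {ω | Y ω = 2})
  intro h
  have h₀₀ := congr_fun₂ h ⟨0, by omega⟩ ⟨0, by omega⟩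
  simp only [varQY, if_true, Matrix.zero_apply] at h₀₀
  nlinarith

lemma forall_fin_add_one_iff {K : ℕ} {p : ℕ → Prop} :
    (∀ i : Fin K, p (i + 1)) ↔ ∀ k ∈ Finset.Icc 1 K, p k := by
  refine ⟨fun h k hk => ?_, fun h i => h _ (Finset.mem_Icc.mpr ⟨by omega, i.isLt⟩)⟩
  obtain ⟨hk₁, hk₂⟩ := Finset.mem_Icc.mp hk
  simpa [Nat.sub_add_cancel hk₁] using h ⟨k - 1, by omega⟩

lemma condCovMatrix_ind_eq_iff {K : ℕ} (h₁₂ : m₁ ≤ m₂) (h₂ : m₂ ≤ mΩ) (hY : Measurable Y) :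
    condCovMatrix m₁ P (fun k : Fin K => ind Y (k + 1)) =
        condCovMatrix m₂ P (fun k : Fin K => ind Y (k + 1)) ↔
      ∀ k ∈ Finset.Icc 1 K, P[ind Y k|m₂] =ᵐ[P] P[ind Y k|m₁] :=
  (condCovMatrix_eq_iff h₁₂ h₂ fun _ => memLp_ind hY P 2 _).trans
    (forall_fin_add_one_iff (p := fun k => P[ind Y k|m₂] =ᵐ[P] P[ind Y k|m₁]))

end OneHot

lemma StrictMonoOn.eq_iff_of_le {α β : Type*} [PartialOrder α] [Preorder β] {f : α → β}
    {s : Set α} {a b : α} (hf : StrictMonoOn f s) (ha : a ∈ s) (hb : b ∈ s) (hab : a ≤ b) :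
    f a = f b ↔ a = b :=
  ⟨fun h => by_contra fun hne => (hf ha hb (lt_of_le_of_ne hab hne)).ne h, congrArg f⟩

section LoewnerOrder

variable {n : Type*} {Nm : Matrix n n ℝ → ℝ}

lemma strictMonoOn_nonneg_of_posSemidef
    (h : ∀ A B : Matrix n n ℝ, A.PosSemidef → B.PosSemidef → (B - A).PosSemidef → A ≠ B →
      Nm A < Nm B) :
    StrictMonoOn Nm {A | 0 ≤ A} := fun A hA B hB hAB =>
  h A B (Matrix.nonneg_iff_posSemidef.mp hA) (Matrix.nonneg_iff_posSemidef.mp hB) hAB.le hAB.ne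

lemma strictMonoOn_comp_div (hN : StrictMonoOn Nm {A | 0 ≤ A}) (hN0 : Nm 0 = 0)
    {B : Matrix n n ℝ} (hB : 0 ≤ B) (hB0 : B ≠ 0) {γ : ℝ → ℝ}
    (hγ : StrictMonoOn γ (Set.Icc 0 1)) :
    StrictMonoOn (fun A => γ (Nm A / Nm B)) (Set.Icc 0 B) := by
  have hNB : 0 < Nm B :=
    hN0 ▸ hN (le_refl (0 : Matrix n n ℝ)) hB (lt_of_le_of_ne hB (Ne.symm hB0))
  refine hγ.comp (fun A hA A' hA' hAA' => div_lt_div_of_pos_right (hN hA.1 hA'.1 hAA') hNB)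
    fun A hA => ⟨div_nonneg ?_ hNB.le, (div_le_one hNB).mpr (hN.monotoneOn hA.1 hB hA.2)⟩
  exact hN0 ▸ hN.monotoneOn (le_refl (0 : Matrix n n ℝ)) hA.1 hA.1

end LoewnerOrder

lemma setIntegral_eq_of_isPiSystem {Ω E : Type*} [NormedAddCommGroup E] [NormedSpace ℝ E]
    {m mΩ : MeasurableSpace Ω} {μ : Measure Ω} (hm : m ≤ mΩ) {p : Set (Set Ω)}
    (h_eq : m = MeasurableSpace.generateFrom p) (hp : IsPiSystem p) {f g : Ω → E}
    (hf : Integrable f μ) (hg : Integrable g μ) (h_univ : ∫ ω, f ω ∂μ = ∫ ω, g ω ∂μ)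
    (h_basic : ∀ s ∈ p, ∫ ω in s, f ω ∂μ = ∫ ω in s, g ω ∂μ) {s : Set Ω}
    (hs : MeasurableSet[m] s) : ∫ ω in s, f ω ∂μ = ∫ ω in s, g ω ∂μ := by
  induction s, hs using MeasurableSpace.induction_on_inter h_eq hp with
  | empty => simp
  | basic s hs => exact h_basic s hs
  | compl s hs ih =>
    rw [setIntegral_compl (hm s hs) hf, setIntegral_compl (hm s hs) hg, ih, h_univ]
  | iUnion s hdisj hs ih =>
    rw [integral_iUnion (fun i => hm _ (hs i)) hdisj hf.integrableOn,
      integral_iUnion (fun i => hm _ (hs i)) hdisj hg.integrableOn]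
    exact tsum_congr ih

section Events

variable {Ω : Type*} {m₁ m₂ mΩ : MeasurableSpace Ω} {P : Measure Ω} [IsFiniteMeasure P]

lemma condExp_indicator_preimage_congr {Y : Ω → ℕ} (hY : Measurable Y) {S : Finset ℕ}
    (hYS : ∀ ω, Y ω ∈ S) (h : ∀ k ∈ S, P[ind Y k|m₂] =ᵐ[P] P[ind Y k|m₁]) (B : Set ℕ) :
    P⟦Y ⁻¹' B|m₂⟧ =ᵐ[P] P⟦Y ⁻¹' B|m₁⟧ := by
  classical
  have hsum : (Y ⁻¹' B).indicator (fun _ => (1 : ℝ)) = ∑ k ∈ S with k ∈ B, ind Y k := by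
    ext ω
    simp only [Finset.sum_apply, ind, Finset.sum_ite_eq, Finset.mem_filter, hYS ω, true_and]
    by_cases hB : Y ω ∈ B <;> simp [hB]
  have hint : ∀ k ∈ S.filter (· ∈ B), Integrable (ind Y k) P :=
    fun k _ => (memLp_ind hY P 1 k).integrable le_rfl
  rw [hsum]
  filter_upwards [condExp_finsetSum hint m₂, condExp_finsetSum hint m₁,
    (Filter.eventually_all_finset _).mpr fun k (hk : k ∈ S.filter (· ∈ B)) =>
      h k (Finset.mem_filter.mp hk).1] with ω h₂ h₁ hk
  rw [h₂, h₁, Finset.sum_apply, Finset.sum_apply]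
  exact Finset.sum_congr rfl hk

lemma condExp_mul_eq_of_condExp_eq (h₁₂ : m₁ ≤ m₂) (h₂ : m₂ ≤ mΩ) {f g : Ω → ℝ}
    (hf : MemLp f 2 P) (hg : MemLp g 2 P) (hgm : StronglyMeasurable[m₂] g)
    (hfm : P[f|m₂] =ᵐ[P] P[f|m₁]) : P[f * g|m₁] =ᵐ[P] P[f|m₁] * P[g|m₁] :=
  calc P[f * g|m₁]
      =ᵐ[P] P[P[f * g|m₂]|m₁] := (condExp_condExp_of_le h₁₂ h₂).symm
    _ =ᵐ[P] P[P[f|m₁] * g|m₁] := condExp_congr_ae <|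
        (condExp_mul_of_stronglyMeasurable_right hgm (hf.integrable_mul hg)
          (hf.integrable one_le_two)).trans (hfm.mul EventuallyEq.rfl)
    _ =ᵐ[P] P[f|m₁] * P[g|m₁] := condExp_mul_of_stronglyMeasurable_left stronglyMeasurable_condExp
        ((hf.condExp one_le_two).integrable_mul hg) (hg.integrable one_le_two)

end Events

section Pair

variable {Ω H H' : Type*} {mΩ : MeasurableSpace Ω} [MeasurableSpace H] [MeasurableSpace H']
  {P : Measure Ω} [IsFiniteMeasure P] {X : Ω → H} {Z : Ω → H'}

lemma comap_le_comap_prodMk (X : Ω → H) (Z : Ω → H') : σ(X) ≤ σ(fun ω => (X ω, Z ω)) :=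
  (measurable_fst.comp (comap_measurable fun ω => (X ω, Z ω))).comap_le

lemma condExp_indicator_prodMk_eq (hX : Measurable X) (hZ : Measurable Z) {T : Set Ω}
    (hT : MeasurableSet T)
    (h : ∀ B, MeasurableSet B →
      P⟦T ∩ Z ⁻¹' B|σ(X)⟧ =ᵐ[P] fun ω => (P⟦T|σ(X)⟧) ω * (P⟦Z ⁻¹' B|σ(X)⟧) ω) :
    P⟦T|σ(fun ω => (X ω, Z ω))⟧ =ᵐ[P] P⟦T|σ(X)⟧ := by
  set pair : Ω → H × H' := fun ω => (X ω, Z ω)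
  have h₁ : σ(X) ≤ mΩ := hX.comap_le
  have h₂ : σ(pair) ≤ mΩ := (hX.prodMk hZ).comap_le
  have hint : Integrable (T.indicator fun _ => (1 : ℝ)) P := (integrable_const 1).indicator hT
  refine (ae_eq_condExp_of_forall_setIntegral_eq h₂ hint
    (fun s _ _ => integrable_condExp.integrableOn) (fun s hs _ => ?_)
    (stronglyMeasurable_condExp.mono (comap_le_comap_prodMk X Z)).aestronglyMeasurable).symm
  -- the rectangles `X⁻¹' A ∩ Z⁻¹' B` form a π-system generating `σ(X, Z)`
  refine setIntegral_eq_of_isPiSystem h₂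
    (by rw [← generateFrom_prod, MeasurableSpace.comap_generateFrom]; rfl)
    (isPiSystem_prod.comap pair) integrable_condExp hint (integral_condExp h₁) ?_ hs
  rintro _ ⟨_, ⟨A, hA, B, hB, rfl⟩, rfl⟩
  have hXA : MeasurableSet[σ(X)] (X ⁻¹' A) := ⟨A, hA, rfl⟩
  have hZB : MeasurableSet (Z ⁻¹' B) := hZ hB
  set b := (Z ⁻¹' B).indicator fun _ => (1 : ℝ)
  have hb : Integrable b P := (integrable_const 1).indicator hZB
  have hQb_int : Integrable (P⟦T|σ(X)⟧ * b) P :=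
    integrable_condExp.mul_of_top_left (memLp_indicator_const ⊤ hZB 1 (Or.inr (by finiteness)))
  have hQb : (Z ⁻¹' B).indicator (P⟦T|σ(X)⟧) = P⟦T|σ(X)⟧ * b := by
    ext ω; by_cases hω : ω ∈ Z ⁻¹' B <;> simp [b, hω]
  have hTb : (T ∩ Z ⁻¹' B).indicator (fun _ => (1 : ℝ)) =
      (Z ⁻¹' B).indicator (T.indicator fun _ => 1) := by
    rw [Set.indicator_indicator, Set.inter_comm]
  calc ∫ ω in pair ⁻¹' A ×ˢ B, (P⟦T|σ(X)⟧) ω ∂P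
      = ∫ ω in X ⁻¹' A, (P[P⟦T|σ(X)⟧ * b|σ(X)]) ω ∂P := by
        rw [Set.mk_preimage_prod, ← setIntegral_indicator hZB, hQb,
          setIntegral_condExp h₁ hQb_int hXA]
    _ = ∫ ω in X ⁻¹' A, (P⟦T ∩ Z ⁻¹' B|σ(X)⟧) ω ∂P := by
        refine setIntegral_congr_ae (h₁ _ hXA) ?_
        filter_upwards [condExp_mul_of_stronglyMeasurable_left stronglyMeasurable_condExp
          hQb_int hb, h B hB] with ω hpull hprod _
        rw [hpull, hprod]; rfl
    _ = ∫ ω in pair ⁻¹' A ×ˢ B, T.indicator (fun _ => (1 : ℝ)) ω ∂P := by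
        rw [setIntegral_condExp h₁ ((integrable_const 1).indicator (hT.inter hZB)) hXA, hTb,
          setIntegral_indicator hZB, Set.mk_preimage_prod]

variable {Y : Ω → ℕ}

lemma condIndepFun_iff_condExp_ind_prodMk_eq [StandardBorelSpace Ω] (hX : Measurable X)
    (hZ : Measurable Z) (hY : Measurable Y) {S : Finset ℕ} (hYS : ∀ ω, Y ω ∈ S) :
    CondIndepFun σ(X) hX.comap_le Y Z P ↔
      ∀ k ∈ S, P[ind Y k|σ(fun ω => (X ω, Z ω))] =ᵐ[P] P[ind Y k|σ(X)] := by
  rw [condIndepFun_iff_condExp_inter_preimage_eq_mul hY hZ]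
  refine ⟨fun h k _ => ?_, fun h s t hs ht => ?_⟩
  · rw [ind_eq_indicator]
    exact condExp_indicator_prodMk_eq hX hZ (hY (measurableSet_singleton k))
      fun B hB => h {k} B (measurableSet_singleton k) hB
  · have hone : (Y ⁻¹' s ∩ Z ⁻¹' t).indicator (fun _ => (1 : ℝ)) =
        (Y ⁻¹' s).indicator (fun _ => 1) * (Z ⁻¹' t).indicator (fun _ => 1) :=
      Set.inter_indicator_one
    rw [hone]
    exact condExp_mul_eq_of_condExp_eq (comap_le_comap_prodMk X Z) (hX.prodMk hZ).comap_le
      (memLp_indicator_const 2 (hY hs) 1 (Or.inr (by finiteness)))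
      (memLp_indicator_const 2 (hZ ht) 1 (Or.inr (by finiteness)))
      (stronglyMeasurable_const.indicator
        ((measurable_snd.comp (comap_measurable fun ω => (X ω, Z ω))) ht))
      (condExp_indicator_preimage_congr hY hYS h s)

end Pair

section Independence

variable {Ω H : Type*} {mΩ : MeasurableSpace Ω} [MeasurableSpace H] {P : Measure Ω}
  [IsProbabilityMeasure P] {X : Ω → H} {Y : Ω → ℕ} {S : Finset ℕ}

lemma indepFun_iff_condExp_ind_eq_bot (hX : Measurable X) (hY : Measurable Y)
    (hYS : ∀ ω, Y ω ∈ S) :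
    IndepFun X Y P ↔ ∀ k ∈ S, P[ind Y k|σ(X)] =ᵐ[P] P[ind Y k|⊥] := by
  refine ⟨fun h k _ => ?_, fun h => ?_⟩
  · rw [condExp_bot]
    exact condExp_indep_eq hY.comap_le hX.comap_le
      (measurable_ind (comap_measurable Y) k).stronglyMeasurable
      ((IndepFun_iff_Indep Y X P).mp h.symm)
  rw [indepFun_iff_measure_inter_preimage_eq_mul]
  intro A B hA hB
  have hprod := condExp_mul_eq_of_condExp_eq bot_le hX.comap_le
    (memLp_indicator_const 2 (hY hB) (1 : ℝ) (Or.inr (by finiteness)))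
    (memLp_indicator_const 2 (hX hA) (1 : ℝ) (Or.inr (by finiteness)))
    (stronglyMeasurable_const.indicator ⟨A, hA, rfl⟩)
    (condExp_indicator_preimage_congr hY hYS h B)
  simp only [condExp_bot] at hprod
  have hone : ((Y ⁻¹' B).indicator fun _ => (1 : ℝ)) * (X ⁻¹' A).indicator (fun _ => 1) =
      (X ⁻¹' A ∩ Y ⁻¹' B).indicator fun _ => 1 := by
    rw [Set.inter_comm]; exact Set.inter_indicator_one.symm
  rw [hone] at hprod
  obtain ⟨_, hreal⟩ := hprod.exists
  simp only [Pi.mul_apply, integral_indicator_const _ ((hX hA).inter (hY hB)),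
    integral_indicator_const _ (hX hA), integral_indicator_const _ (hY hB), smul_eq_mul,
    mul_one, measureReal_def] at hreal
  rwa [mul_comm, ← ENNReal.toReal_mul,
    ENNReal.toReal_eq_toReal_iff' (by finiteness) (by finiteness)] at hreal

lemma exists_measurable_comp_iff_condExp_ind_eq (hX : Measurable X) (hY : Measurable Y)
    (hYS : ∀ ω, Y ω ∈ S) :
    (∃ h : H → ℕ, Measurable h ∧ (∀ x, h x ∈ S) ∧ Y =ᵐ[P] fun ω => h (X ω)) ↔
      ∀ k ∈ S, P[ind Y k|mΩ] =ᵐ[P] P[ind Y k|σ(X)] := by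
  simp only [condExp_ind_self hY]
  constructor
  · rintro ⟨h, hh, -, hYh⟩ k -
    have hind : ind Y k =ᵐ[P] ind (fun ω => h (X ω)) k := by
      filter_upwards [hYh] with ω hω
      simp only [ind, hω]
    calc ind Y k
        =ᵐ[P] ind (fun ω => h (X ω)) k := hind
      _ = P[ind (fun ω => h (X ω)) k|σ(X)] :=
          (condExp_of_stronglyMeasurable hX.comap_le
            (measurable_ind (hh.comp (comap_measurable X)) k).stronglyMeasurable
            ((memLp_ind (hh.comp hX) P 1 k).integrable le_rfl)).symm
      _ =ᵐ[P] P[ind Y k|σ(X)] := condExp_congr_ae hind.symm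
  -- `Y` is a.e. the σ(X)-measurable `∑ k * P(Y = k ∣ X)`: factor that through `X`, then round
  -- and clamp into `S`.
  · intro hS
    obtain ⟨ω₀⟩ := nonempty_of_isProbabilityMeasure P
    have hg : Measurable[σ(X)] fun ω => ∑ k ∈ S, (k : ℝ) * (P[ind Y k|σ(X)]) ω :=
      Finset.measurable_fun_sum S fun k _ =>
        stronglyMeasurable_condExp.measurable.const_mul (k : ℝ)
    obtain ⟨g, hg_meas, hg_eq⟩ := hg.exists_eq_measurable_comp
    have hYg : ∀ᵐ ω ∂P, (Y ω : ℝ) = g (X ω) := by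
      filter_upwards [(Filter.eventually_all_finset S).mpr hS] with ω hω
      calc (Y ω : ℝ)
          = ∑ k ∈ S, (k : ℝ) * ind Y k ω := by simp [ind, hYS ω]
        _ = g (X ω) := by
            rw [← Function.comp_apply (f := g), ← hg_eq]
            exact Finset.sum_congr rfl fun k hk => by rw [hω k hk]
    classical
    let clamp : ℕ → ℕ := fun n => if n ∈ S then n else Y ω₀
    refine ⟨fun x => clamp ⌊g x⌋₊, (measurable_from_nat (f := clamp)).comp hg_meas.nat_floor,
      fun x => ?_, ?_⟩
    · dsimp only [clamp]
      split_ifs with hn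
      exacts [hn, hYS ω₀]
    · filter_upwards [hYg] with ω hω
      simp only [clamp, ← hω, Nat.floor_natCast, if_pos (hYS ω)]

end Independence

section CovMatrix

variable {Ω H H' : Type*} {mΩ : MeasurableSpace Ω} [MeasurableSpace H] [MeasurableSpace H']
  {P : Measure Ω} [IsProbabilityMeasure P] {K : ℕ} {X : Ω → H} {Z : Ω → H'} {Y : Ω → ℕ}

lemma covMatrix_nonneg (hX : Measurable X) (hY : Measurable Y) : 0 ≤ covMatrix P X Y K := by
  rw [← condCovMatrix_bot (P := P) (f := fun k : Fin K => ind Y (k + 1))]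
  exact condCovMatrix_mono bot_le hX.comap_le fun _ => memLp_ind hY P 2 _

lemma covMatrix_le_covMatrix_prodMk (hX : Measurable X) (hZ : Measurable Z) (hY : Measurable Y) :
    covMatrix P X Y K ≤ covMatrix P (fun ω => (X ω, Z ω)) Y K :=
  condCovMatrix_mono (comap_le_comap_prodMk X Z) (hX.prodMk hZ).comap_le
    fun _ => memLp_ind hY P 2 _

lemma covMatrix_le_varQY (hX : Measurable X) (hY : Measurable Y) :
    covMatrix P X Y K ≤ varQY P Y K := by
  rw [varQY_eq_condCovMatrix hY]
  exact condCovMatrix_mono hX.comap_le le_rfl fun _ => memLp_ind hY P 2 _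

lemma covMatrix_eq_zero_iff_indepFun (hX : Measurable X) (hY : Measurable Y)
    (hYr : ∀ ω, Y ω ∈ Finset.Icc 1 K) : covMatrix P X Y K = 0 ↔ IndepFun X Y P := by
  rw [← condCovMatrix_bot (P := P) (f := fun k : Fin K => ind Y (k + 1)), eq_comm,
    indepFun_iff_condExp_ind_eq_bot hX hY hYr]
  exact condCovMatrix_ind_eq_iff bot_le hX.comap_le hY

lemma covMatrix_eq_varQY_iff (hX : Measurable X) (hY : Measurable Y)
    (hYr : ∀ ω, Y ω ∈ Finset.Icc 1 K) :
    covMatrix P X Y K = varQY P Y K ↔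
      ∃ h : H → ℕ, Measurable h ∧ (∀ x, h x ∈ Finset.Icc 1 K) ∧ Y =ᵐ[P] fun ω => h (X ω) := by
  rw [varQY_eq_condCovMatrix hY, exists_measurable_comp_iff_condExp_ind_eq hX hY hYr]
  exact condCovMatrix_ind_eq_iff hX.comap_le le_rfl hY

lemma covMatrix_eq_covMatrix_prodMk_iff [StandardBorelSpace Ω] (hX : Measurable X)
    (hZ : Measurable Z) (hY : Measurable Y) (hYr : ∀ ω, Y ω ∈ Finset.Icc 1 K) :
    covMatrix P X Y K = covMatrix P (fun ω => (X ω, Z ω)) Y K ↔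
      CondIndepFun σ(X) hX.comap_le Y Z P := by
  rw [condIndepFun_iff_condExp_ind_prodMk_eq hX hZ hY hYr]
  exact condCovMatrix_ind_eq_iff (comap_le_comap_prodMk X Z) (hX.prodMk hZ).comap_le hY

end CovMatrix

theorem psi_norm_properties_general {Ω H H' : Type*} [MeasurableSpace Ω] [StandardBorelSpace Ω]
    [MeasurableSpace H] [MeasurableSpace H']
    (P : Measure Ω) [IsProbabilityMeasure P] (K : ℕ) (hK : 2 ≤ K)
    (X : Ω → H) (Z : Ω → H') (Y : Ω → ℕ)
    (hX : Measurable X) (hZ : Measurable Z) (hY : Measurable Y)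
    (hYr : ∀ ω, Y ω ∈ Finset.Icc 1 K)
    (hp : ∀ k ∈ Finset.Icc 1 K, 0 < P {ω | Y ω = k})
    -- `Nm` is a norm on real `K×K` matrices …
    (Nm : Matrix (Fin K) (Fin K) ℝ → ℝ)
    (hN0 : ∀ A, Nm A = 0 ↔ A = 0)
    -- … which is strictly monotone:
    (hNstrict : ∀ A B : Matrix (Fin K) (Fin K) ℝ, A.PosSemidef → B.PosSemidef →
      (B - A).PosSemidef → A ≠ B → Nm A < Nm B)
    -- `γ : [0,1] → [0,1]` strictly increasing with `γ(0)=0`, `γ(1)=1`: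
    (γ : ℝ → ℝ) (hγmono : StrictMonoOn γ (Set.Icc 0 1))
    (hγ0 : γ 0 = 0) (hγ1 : γ 1 = 1) :
    (0 ≤ γ (Nm (covMatrix P X Y K) / Nm (varQY P Y K)) ∧
      γ (Nm (covMatrix P X Y K) / Nm (varQY P Y K)) ≤ 1) ∧
    (γ (Nm (covMatrix P X Y K) / Nm (varQY P Y K)) = 0 ↔ IndepFun X Y P) ∧
    (γ (Nm (covMatrix P X Y K) / Nm (varQY P Y K)) = 1 ↔
      ∃ h : H → ℕ, Measurable h ∧ (∀ x, h x ∈ Finset.Icc 1 K) ∧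
        Y =ᵐ[P] fun ω => h (X ω)) ∧
    (γ (Nm (covMatrix P X Y K) / Nm (varQY P Y K)) ≤
      γ (Nm (covMatrix P (fun ω => (X ω, Z ω)) Y K) / Nm (varQY P Y K))) ∧
    (γ (Nm (covMatrix P X Y K) / Nm (varQY P Y K)) =
        γ (Nm (covMatrix P (fun ω => (X ω, Z ω)) Y K) / Nm (varQY P Y K)) ↔
      CondIndepFun (MeasurableSpace.comap X inferInstance) hX.comap_le Y Z P) := by
  have h₁ : covMatrix P X Y K ∈ Set.Icc 0 (varQY P Y K) :=
    ⟨covMatrix_nonneg hX hY, covMatrix_le_varQY hX hY⟩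
  have h₂ : covMatrix P (fun ω => (X ω, Z ω)) Y K ∈ Set.Icc 0 (varQY P Y K) :=
    ⟨covMatrix_nonneg (hX.prodMk hZ) hY, covMatrix_le_varQY (hX.prodMk hZ) hY⟩
  have h₀ : (0 : Matrix (Fin K) (Fin K) ℝ) ∈ Set.Icc 0 (varQY P Y K) := ⟨le_rfl, h₁.1.trans h₁.2⟩
  have h₃ : varQY P Y K ∈ Set.Icc 0 (varQY P Y K) := ⟨h₀.2, le_rfl⟩
  have hB0 := varQY_ne_zero hK hY hp
  have hφ := strictMonoOn_comp_div (strictMonoOn_nonneg_of_posSemidef hNstrict) ((hN0 0).2 rfl)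
    h₀.2 hB0 hγmono
  have hφ₀ : γ (Nm 0 / Nm (varQY P Y K)) = 0 := by rw [(hN0 0).2 rfl, zero_div, hγ0]
  have hφ₃ : γ (Nm (varQY P Y K) / Nm (varQY P Y K)) = 1 := by
    rw [div_self (mt (hN0 _).1 hB0), hγ1]
  have hA₁A₂ := covMatrix_le_covMatrix_prodMk (P := P) (K := K) hX hZ hY
  refine ⟨⟨hφ₀ ▸ hφ.monotoneOn h₀ h₁ h₁.1, hφ₃ ▸ hφ.monotoneOn h₁ h₃ h₁.2⟩, ?_, ?_,
    hφ.monotoneOn h₁ h₂ hA₁A₂, ?_⟩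
  · rw [← hφ₀, eq_comm, hφ.eq_iff_of_le h₀ h₁ h₁.1, eq_comm]
    exact covMatrix_eq_zero_iff_indepFun hX hY hYr
  · rw [← hφ₃, hφ.eq_iff_of_le h₁ h₃ h₁.2]
    exact covMatrix_eq_varQY_iff hX hY hYr
  · rw [hφ.eq_iff_of_le h₁ h₂ hA₁A₂]
    exact covMatrix_eq_covMatrix_prodMk_iff hX hZ hY hYr

/-- Theorem 7: for any strictly monotone matrix norm `‖·‖` and any strictly increasing
`γ : [0,1] → [0,1]` with `γ(0)=0`, `γ(1)=1`, the coefficient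
`ψ_{‖·‖,γ}(X,Y) = γ(‖Var(Q(X))‖ / ‖Var(Q(Y))‖)` satisfies (M1)–(M5). -/
theorem psi_norm_properties {Ω H H' : Type*} [MeasurableSpace Ω] [StandardBorelSpace Ω]
    [Nonempty Ω] [MetricSpace H]
    [MeasurableSpace H] [BorelSpace H] [TopologicalSpace.SeparableSpace H]
    [MetricSpace H'] [MeasurableSpace H'] [BorelSpace H'] [TopologicalSpace.SeparableSpace H']
    (P : Measure Ω) [IsProbabilityMeasure P] (K : ℕ) (hK : 2 ≤ K)
    (X : Ω → H) (Z : Ω → H') (Y : Ω → ℕ)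
    (hX : Measurable X) (hZ : Measurable Z) (hY : Measurable Y)
    (hYr : ∀ ω, Y ω ∈ Finset.Icc 1 K)
    (hp : ∀ k ∈ Finset.Icc 1 K, 0 < P {ω | Y ω = k})
    -- `Nm` is a norm on real `K×K` matrices …
    (Nm : Matrix (Fin K) (Fin K) ℝ → ℝ)
    (hN0 : ∀ A, Nm A = 0 ↔ A = 0)
    (hNsmul : ∀ (c : ℝ) A, Nm (c • A) = |c| * Nm A)
    (hNadd : ∀ A B, Nm (A + B) ≤ Nm A + Nm B)
    -- … which is strictly monotone:
    (hNmono : ∀ A B : Matrix (Fin K) (Fin K) ℝ, A.PosSemidef → B.PosSemidef →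
      (B - A).PosSemidef → Nm A ≤ Nm B)
    (hNstrict : ∀ A B : Matrix (Fin K) (Fin K) ℝ, A.PosSemidef → B.PosSemidef →
      (B - A).PosSemidef → A ≠ B → Nm A < Nm B)
    -- `γ : [0,1] → [0,1]` strictly increasing with `γ(0)=0`, `γ(1)=1`:
    (γ : ℝ → ℝ) (hγmono : StrictMonoOn γ (Set.Icc 0 1))
    (hγmaps : Set.MapsTo γ (Set.Icc 0 1) (Set.Icc 0 1))
    (hγ0 : γ 0 = 0) (hγ1 : γ 1 = 1) :
    (0 ≤ γ (Nm (covMatrix P X Y K) / Nm (varQY P Y K)) ∧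
      γ (Nm (covMatrix P X Y K) / Nm (varQY P Y K)) ≤ 1) ∧
    (γ (Nm (covMatrix P X Y K) / Nm (varQY P Y K)) = 0 ↔ IndepFun X Y P) ∧
    (γ (Nm (covMatrix P X Y K) / Nm (varQY P Y K)) = 1 ↔
      ∃ h : H → ℕ, Measurable h ∧ (∀ x, h x ∈ Finset.Icc 1 K) ∧
        Y =ᵐ[P] fun ω => h (X ω)) ∧
    (γ (Nm (covMatrix P X Y K) / Nm (varQY P Y K)) ≤
      γ (Nm (covMatrix P (fun ω => (X ω, Z ω)) Y K) / Nm (varQY P Y K))) ∧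
    (γ (Nm (covMatrix P X Y K) / Nm (varQY P Y K)) =
        γ (Nm (covMatrix P (fun ω => (X ω, Z ω)) Y K) / Nm (varQY P Y K)) ↔
      CondIndepFun (MeasurableSpace.comap X inferInstance) hX.comap_le Y Z P) :=
  psi_norm_properties_general P K hK X Z Y hX hZ hY hYr hp Nm hN0 hNstrict γ hγmono hγ0 hγ1
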